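/- arXiv:1402.4714 — 7 statements merged into one kernel-verified Lean document; each statement's English description precedes it below -/
import Mathlib

section
/- Let H be a Hopf algebra over a field k, B a left H-module algebra with basis {1, n} satisfying n^2 = ϖ·1 for ϖ ∈ k, and suppose h·1 = ε(h)·1 for all h ∈ H. Define α, β ∈ H* by h·n = β(h)·1 + α(h)·n. Then in the convolution algebra H*: β * α = -(α * β), and β * β = ϖ·(ε - α * α). -/
/-!
Expanding the module-algebra axiom `h·(n n) = (h₍₁₎·n)(h₍₂₎·n)` with `h·n = β(h) + α(h) n`
and `n² = ϖ` gives
`ϖ ε(h) = (β * β)(h) + ϖ (α * α)(h) + ((β * α)(h) + (α * β)(h)) n`;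
comparing coefficients in the basis `{1, n}` yields both identities.
-/

open TensorProduct

/-- The convolution product on the dual of a coalgebra. -/
noncomputable def conv {k H : Type} [CommRing k] [AddCommGroup H] [Module k H]
    [Coalgebra k H] (φ ψ : H →ₗ[k] k) : H →ₗ[k] k :=
  LinearMap.mul' k k ∘ₗ TensorProduct.map φ ψ ∘ₗ Coalgebra.comul

section

variable {k H B : Type} [CommRing k] [AddCommGroup H] [Module k H] [Ring B] [Algebra k B]

theorem conv_apply [Coalgebra k H] (φ ψ : H →ₗ[k] k) (h : H) :
    conv φ ψ h = LinearMap.mul' k k (map φ ψ (Coalgebra.comul h)) :=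
  rfl

theorem mul'_map_smulRight (f g : H →ₗ[k] k) (b b' : B) (t : H ⊗[k] H) :
    LinearMap.mul' k B (map (f.smulRight b) (g.smulRight b') t) =
      LinearMap.mul' k k (map f g t) • (b * b') := by
  induction t using TensorProduct.induction_on with
  | zero => simp
  | tmul x y =>
    simp [LinearMap.mul'_apply, smul_smul, mul_comm]
  | add x y hx hy => simp [hx, hy, add_smul]

theorem mul'_map_smulRight_one_add_smulRight (α β : H →ₗ[k] k) {n : B} {ϖ : k}
    (hϖ : n * n = ϖ • (1 : B)) (t : H ⊗[k] H) :
    LinearMap.mul' k B (map (β.smulRight 1 + α.smulRight n) (β.smulRight 1 + α.smulRight n) t) =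
      (LinearMap.mul' k k (map β β t) + ϖ * LinearMap.mul' k k (map α α t)) • (1 : B) +
        (LinearMap.mul' k k (map β α t) + LinearMap.mul' k k (map α β t)) • n := by
  simp only [map_add_left, map_add_right, LinearMap.add_apply, map_add, mul'_map_smulRight,
    one_mul, mul_one, hϖ]
  module

end

theorem stmt1_general (k H B : Type) [Field k] [Ring H] [HopfAlgebra k H]
    [Ring B] [Algebra k B]
    (act : H →ₗ[k] B →ₗ[k] B)
    (hma1 : ∀ h : H, act h 1 = (Coalgebra.counit (R := k) h : k) • (1 : B))
    (hma : ∀ (h : H) (b b' : B), act h (b * b') =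
      LinearMap.mul' k B ((TensorProduct.map (act.flip b) (act.flip b')) (Coalgebra.comul h)))
    (c : Module.Basis (Fin 2) k B) (hc0 : c 0 = 1) (n : B) (hn : n = c 1)
    (ϖ : k) (hϖ : n * n = ϖ • (1 : B))
    (α β : H →ₗ[k] k)
    (hdef : ∀ h : H, act h n = β h • (1 : B) + α h • n) :
    conv β α = - conv α β ∧
    conv β β = ϖ • (Coalgebra.counit - conv α α) := by
  have hflip : act.flip n = β.smulRight 1 + α.smulRight n := by
    ext h
    simp [hdef h]
  have hindep : LinearIndependent k ![(1 : B), n] := by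
    convert c.linearIndependent
    ext i
    fin_cases i <;> simp [hc0, hn]
  have hcoeff (h : H) :
      conv β β h + ϖ * conv α α h - ϖ * Coalgebra.counit (R := k) h = 0 ∧
        conv β α h + conv α β h = 0 := by
    refine LinearIndependent.pair_iff.mp hindep _ _ ?_
    have hexp := hma h n n
    rw [hϖ, map_smul, hma1, hflip, mul'_map_smulRight_one_add_smulRight α β hϖ] at hexp
    simp only [conv_apply]
    rw [sub_smul, sub_add_eq_add_sub, sub_eq_zero, ← hexp, smul_smul]
  constructor
  · ext h
    simp only [LinearMap.neg_apply]
    linear_combination (hcoeff h).2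
  · ext h
    simp only [LinearMap.smul_apply, LinearMap.sub_apply, smul_eq_mul]
    linear_combination (hcoeff h).1

/-- Let `H` be a Hopf algebra over a field `k`, `B` a left `H`-module
algebra with basis `{1, n}` satisfying `n² = ϖ•1`, and suppose `h·1 = ε(h)•1` for all `h`.
Define `α, β ∈ H*` by `h·n = β(h)•1 + α(h)•n`.  Then in the convolution algebra `H*` we have
`β * α = -(α * β)` and `β * β = ϖ • (ε - α * α)`. -/
theorem stmt1 (k H B : Type) [Field k] [Ring H] [HopfAlgebra k H]
    [Ring B] [Algebra k B]
    (act : H →ₗ[k] B →ₗ[k] B)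
    (hact_one : ∀ h h' : H, act (h * h') = act h ∘ₗ act h') (hact_id : act 1 = LinearMap.id)
    (hma1 : ∀ h : H, act h 1 = (Coalgebra.counit (R := k) h : k) • (1 : B))
    (hma : ∀ (h : H) (b b' : B), act h (b * b') =
      LinearMap.mul' k B ((TensorProduct.map (act.flip b) (act.flip b')) (Coalgebra.comul h)))
    (c : Module.Basis (Fin 2) k B) (hc0 : c 0 = 1) (n : B) (hn : n = c 1)
    (ϖ : k) (hϖ : n * n = ϖ • (1 : B))
    (α β : H →ₗ[k] k)
    (hdef : ∀ h : H, act h n = β h • (1 : B) + α h • n) :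
    conv β α = - conv α β ∧
    conv β β = ϖ • (Coalgebra.counit - conv α α) :=
  stmt1_general k H B act hma1 hma c hc0 n hn ϖ hϖ α β hdef
end

section
/- Let H be a Hopf algebra over a field k of characteristic not 2, B a 2-dimensional left H-module algebra and H-module coalgebra with basis {1, n}, n^2 = ϖ·1, such that 1 is grouplike and h·1 = ε(h)·1 for all h. If the functional β defined by h·n = β(h)·1 + α(h)·n satisfies β = ε(n)(ε - α) with α an invertible algebra map, then β = 0, i.e. h·n = α(h)·n for all h ∈ H. -/
/-!
`β = εB(n)(ε - α)` is a polynomial in `α`, hence commutes with `α` in the convolution algebra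
`H*`. Together with `β * α = -(α * β)` this gives `2 (β * α) = 0`, so `β * α = 0` since `2` is
invertible, and `β = 0` since `α` is convolution-invertible.
-/

open TensorProduct

open WithConv

theorem eq_zero_of_commute_of_mul_eq_neg_mul {R : Type*} [Ring R] {a b : R}
    (h2 : IsUnit (2 : R)) (ha : IsUnit a) (hba : Commute b a) (h : b * a = -(a * b)) :
    b = 0 := by
  rw [← hba.eq, eq_neg_iff_add_eq_zero, ← two_mul] at h
  exact ha.mul_left_eq_zero.mp (h2.mul_right_eq_zero.mp h)

section Convolution

variable {k H : Type} [CommRing k] [AddCommGroup H] [Module k H] [Coalgebra k H]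

theorem toConv_conv (φ ψ : H →ₗ[k] k) : toConv (conv φ ψ) = toConv φ * toConv ψ := rfl

theorem toConv_counit : toConv (Coalgebra.counit : H →ₗ[k] k) = 1 := by
  ext; simp

theorem isUnit_toConv_of_conv_eq_counit {α α' : H →ₗ[k] k}
    (hright : conv α α' = Coalgebra.counit) (hleft : conv α' α = Coalgebra.counit) :
    IsUnit (toConv α) :=
  ⟨⟨toConv α, toConv α', by rw [← toConv_conv, hright, toConv_counit],
    by rw [← toConv_conv, hleft, toConv_counit]⟩, rfl⟩

end Convolution

theorem stmt2_general (k H B : Type) [Field k] (hchar : ringChar k ≠ 2)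
    [Ring H] [HopfAlgebra k H] [Ring B] [Algebra k B]
    (act : H →ₗ[k] B →ₗ[k] B)
    (n : B)
    (α β : H →ₗ[k] k)
    (hαinv : ∃ α' : H →ₗ[k] k,
      conv α α' = Coalgebra.counit ∧ conv α' α = Coalgebra.counit)
    (hdef : ∀ h : H, act h n = β h • (1 : B) + α h • n)
    (hanti : conv β α = - conv α β)
    (εB : B →ₗ[k] k)
    (hβ : β = εB n • (Coalgebra.counit (R := k) (A := H) - α)) :
    β = 0 ∧ ∀ h : H, act h n = α h • n := by
  obtain ⟨α', hαα', hα'α⟩ := hαinv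
  have hcomm : Commute (toConv β) (toConv α) := by
    rw [hβ, toConv_smul, toConv_sub, toConv_counit]
    exact ((Commute.one_left _).sub_left (Commute.refl _)).smul_left _
  have hβ0 : β = 0 := by
    rw [← toConv_eq_zero]
    have h2 : IsUnit (2 : WithConv (H →ₗ[k] k)) := by
      simpa only [map_ofNat] using
        (Ring.two_ne_zero hchar).isUnit.map (algebraMap k (WithConv (H →ₗ[k] k)))
    refine eq_zero_of_commute_of_mul_eq_neg_mul h2
      (isUnit_toConv_of_conv_eq_counit hαα' hα'α) hcomm ?_
    rw [← toConv_conv, ← toConv_conv, hanti, toConv_neg]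
  refine ⟨hβ0, fun h => ?_⟩
  rw [hdef h, hβ0, LinearMap.zero_apply, zero_smul, zero_add]

/-- Let `H` be a Hopf algebra over a field `k` of characteristic not 2, and
`B` a 2-dimensional left `H`-module algebra and `H`-module coalgebra with basis `{1, n}`,
`n² = ϖ•1`, `1` grouplike and `h·1 = ε(h)•1`.  If the functional `β` defined by
`h·n = β(h)•1 + α(h)•n` satisfies `β = ε_B(n)(ε - α)` with `α` a convolution-invertible
algebra map, and `β * α = -(α * β)` (from the module-algebra structure), then `β = 0`,
i.e. `h·n = α(h)•n` for all `h ∈ H`. -/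
theorem stmt2 (k H B : Type) [Field k] (hchar : ringChar k ≠ 2)
    [Ring H] [HopfAlgebra k H] [Ring B] [Algebra k B]
    (act : H →ₗ[k] B →ₗ[k] B)
    (c : Module.Basis (Fin 2) k B) (hc0 : c 0 = 1) (n : B) (hn : n = c 1)
    (ϖ : k) (hϖ : n * n = ϖ • (1 : B))
    (α β : H →ₗ[k] k)
    (hα1 : α 1 = 1) (hαmul : ∀ h h' : H, α (h * h') = α h * α h')
    (hαinv : ∃ α' : H →ₗ[k] k,
      conv α α' = Coalgebra.counit ∧ conv α' α = Coalgebra.counit)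
    (hdef : ∀ h : H, act h n = β h • (1 : B) + α h • n)
    (hanti : conv β α = - conv α β)
    (εB : B →ₗ[k] k) (hεB1 : εB 1 = 1)
    (hβ : β = εB n • (Coalgebra.counit (R := k) (A := H) - α)) :
    β = 0 ∧ ∀ h : H, act h n = α h • n :=
  stmt2_general k H B hchar act n α β hαinv hdef hanti εB hβ
end

section
/- Let θ be a linear automorphism of a k-vector space V permuting a basis B of V, with all ⟨θ⟩-orbits of B finite. Then θ is diagonalizable (V is the direct sum of eigenspaces of θ) if and only if for every orbit length r occurring, k contains a primitive r-th root of unity. -/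
open Module Function Finset

/-!
If `ζ` is a primitive `r`-th root of unity and `θ ^ r` fixes `v`, then `r • v` is the sum of the
discrete Fourier components `∑_{j<r} ζ^{jm} • θ^j v`, each of which is an eigenvector of `θ`.
Conversely, write `b i` as a sum of eigenvectors `v_μ` and let `c_μ` be the `i`-coordinate of `v_μ`.
Moving along the orbit of `i` gives `∑ μ^n c_μ = [r ∣ n]`, and `μ^r = 1` whenever `c_μ ≠ 0`.
Taking for `n` the order `d ≤ r` of the cyclic group of `r`-th roots of unity in `k` gives
`1 = [r ∣ d]`, so that group has order `r` and its generators are primitive `r`-th roots.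
-/

theorem Finset.sum_range_succ_eq_sum_range {M : Type*} [AddCancelCommMonoid M] (g : ℕ → M)
    {r : ℕ} (h : g r = g 0) : ∑ j ∈ range r, g (j + 1) = ∑ j ∈ range r, g j := by
  have := sum_range_succ' g r
  rw [sum_range_succ, h] at this
  exact add_right_cancel this.symm

theorem IsPrimitiveRoot.sum_range_pow_mul {R : Type*} [CommRing R] [IsDomain R] {ζ : R} {r : ℕ}
    (hζ : IsPrimitiveRoot ζ r) (j : ℕ) :
    ∑ m ∈ range r, ζ ^ (j * m) = if r ∣ j then (r : R) else 0 := by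
  split_ifs with hj
  · simp [pow_mul, (hζ.pow_eq_one_iff_dvd j).mpr hj]
  · have hne : ζ ^ j - 1 ≠ 0 := sub_ne_zero.mpr fun h => hj ((hζ.pow_eq_one_iff_dvd j).mp h)
    have := geom_sum_mul (ζ ^ j) r
    rw [← pow_mul, mul_comm j r, pow_mul, hζ.pow_eq_one, one_pow, sub_self] at this
    simpa only [pow_mul] using (mul_eq_zero.mp this).resolve_right hne

namespace Module.End

variable {k V : Type*} [Field k] [AddCommGroup V] [Module k V] {f : End k V} {v : V}
  {r : ℕ} {ζ : k}

theorem sum_range_pow_smul_pow_apply_mem_eigenspace (hζ : ζ ^ r = 1) (hr : r ≠ 0)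
    (hv : (f ^ r) v = v) (m : ℕ) :
    ∑ j ∈ range r, ζ ^ (j * m) • (f ^ j) v ∈ f.eigenspace (ζ ^ m)⁻¹ := by
  have hζ0 : ζ ≠ 0 := by rintro rfl; simp [zero_pow hr] at hζ
  rw [mem_eigenspace_iff, eq_inv_smul_iff₀ (pow_ne_zero m hζ0), map_sum, smul_sum]
  convert sum_range_succ_eq_sum_range (fun j => ζ ^ (j * m) • (f ^ j) v) (r := r) ?_ using 2
  · rw [map_smul, smul_smul, ← pow_add, pow_succ', Module.End.mul_apply]
    ring_nf
  · simp [hv, pow_mul, hζ]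

theorem mem_iSup_eigenspace_of_pow_apply_eq_self (hζ : IsPrimitiveRoot ζ r) (hr : 0 < r)
    (hv : (f ^ r) v = v) : v ∈ ⨆ μ, f.eigenspace μ := by
  have := NeZero.of_pos hr
  have hr' : (r : k) ≠ 0 := hζ.neZero'.out
  have hsum : ∑ m ∈ range r, ∑ j ∈ range r, ζ ^ (j * m) • (f ^ j) v = (r : k) • v := by
    rw [sum_comm]
    simp_rw [← sum_smul, hζ.sum_range_pow_mul]
    rw [sum_eq_single 0 (fun j hj hj0 => ?_) (by simp [hr])]
    · simp
    · rw [if_neg (Nat.not_dvd_of_pos_of_lt (Nat.pos_of_ne_zero hj0) (mem_range.mp hj)), zero_smul]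
  rw [← inv_smul_smul₀ hr' v, ← hsum]
  exact Submodule.smul_mem _ _ <| Submodule.sum_mem _ fun m _ =>
    Submodule.mem_iSup_of_mem _ <|
      sum_range_pow_smul_pow_apply_mem_eigenspace hζ.pow_eq_one hr.ne' hv m

end Module.End

theorem exists_isPrimitiveRoot_of_sum_pow_mul_eq_ite {k : Type*} [Field k] {r : ℕ} (hr : 0 < r)
    (s : Finset k) (c : k → k) (hroot : ∀ μ ∈ s, μ ^ r * c μ = c μ)
    (hsum : ∀ n, ∑ μ ∈ s, μ ^ n * c μ = if r ∣ n then 1 else 0) :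
    ∃ ζ : k, IsPrimitiveRoot ζ r := by
  have := NeZero.of_pos hr
  set d := Nat.card (rootsOfUnity r k)
  have hd : ∀ μ ∈ s, μ ^ d * c μ = c μ := by
    intro μ hμs
    by_cases hc : c μ = 0
    · simp [hc]
    have hμ : μ ^ r = 1 := by simpa [hc] using hroot μ hμs
    have hμd : μ ^ d = 1 := by
      rw [← rootsOfUnity.coe_mkOfPowEq hμ, ← Units.val_pow_eq_pow_val, ← Subgroup.coe_pow,
        pow_card_eq_one']
      rfl
    rw [hμd, one_mul]
  have hdvd : r ∣ d := by
    by_contra h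
    have h0 : ∑ μ ∈ s, c μ = 1 := by simpa using hsum 0
    have := hsum d
    rw [if_neg h, sum_congr rfl hd, h0] at this
    exact one_ne_zero this
  rw [← card_rootsOfUnity_eq_iff_exists_isPrimitiveRoot]
  exact le_antisymm (card_rootsOfUnity k r) (Nat.le_of_dvd Nat.card_pos hdvd)

theorem Equiv.Perm.pow_inv_apply_eq_self_iff {ι : Type*} {e : Equiv.Perm ι} {n : ℕ} {i : ι} :
    (e ^ n)⁻¹ i = i ↔ minimalPeriod e i ∣ n := by
  rw [Equiv.Perm.inv_eq_iff_eq, eq_comm, Equiv.Perm.coe_pow, ← isPeriodicPt_iff_minimalPeriod_dvd]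
  rfl

namespace Module.Basis

variable {k V ι : Type*} [Field k] [AddCommGroup V] [Module k V] (b : Basis ι k V)
  {θ : End k V} {e : Equiv.Perm ι}

theorem repr_apply_of_forall_apply_basis_eq (hperm : ∀ i, θ (b i) = b (e i)) (v : V) (j : ι) :
    b.repr (θ v) j = b.repr v (e⁻¹ j) := by
  refine LinearMap.congr_fun (b.ext (f₁ := (Finsupp.lapply j) ∘ₗ b.repr.toLinearMap ∘ₗ θ)
    (f₂ := (Finsupp.lapply (e⁻¹ j)) ∘ₗ b.repr.toLinearMap) fun m => ?_) v
  simp only [LinearMap.comp_apply, LinearEquiv.coe_coe, hperm, repr_self, Finsupp.lapply_apply]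
  rw [← Finsupp.single_apply_left e.injective m (e⁻¹ j) 1, Equiv.Perm.coe_inv, e.apply_symm_apply]

theorem repr_pow_inv_apply_of_apply_eq_smul (hperm : ∀ i, θ (b i) = b (e i)) {v : V} {μ : k}
    (hv : θ v = μ • v) (n : ℕ) (j : ι) : b.repr v ((e ^ n)⁻¹ j) = μ ^ n * b.repr v j := by
  induction n with
  | zero => simp
  | succ n ih =>
    rw [pow_succ, mul_inv_rev, Equiv.Perm.mul_apply,
      ← repr_apply_of_forall_apply_basis_eq b hperm, hv, map_smul, Finsupp.smul_apply, ih,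
      smul_eq_mul, pow_succ]
    ring

theorem pow_apply_basis_of_forall_apply_basis_eq (hperm : ∀ i, θ (b i) = b (e i)) (n : ℕ)
    (i : ι) : (θ ^ n) (b i) = b ((e ^ n) i) := by
  induction n with
  | zero => simp
  | succ n ih => rw [pow_succ', Module.End.mul_apply, ih, hperm, pow_succ', Equiv.Perm.mul_apply]

theorem exists_isPrimitiveRoot_of_mem_iSup_eigenspace (hperm : ∀ i, θ (b i) = b (e i)) {i : ι}
    (hi : 0 < minimalPeriod e i) (hmem : b i ∈ ⨆ μ, θ.eigenspace μ) :
    ∃ ζ : k, IsPrimitiveRoot ζ (minimalPeriod e i) := by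
  classical
  obtain ⟨f, hf, hsum⟩ := (Submodule.mem_iSup_iff_exists_finsupp _ _).mp hmem
  have hgeom (μ : k) (n : ℕ) := b.repr_pow_inv_apply_of_apply_eq_smul hperm
    (Module.End.mem_eigenspace_iff.mp (hf μ)) n i
  refine exists_isPrimitiveRoot_of_sum_pow_mul_eq_ite hi f.support (fun μ => b.repr (f μ) i)
    (fun μ _ => ?_) (fun n => ?_)
  · rw [← hgeom, Equiv.Perm.pow_inv_apply_eq_self_iff.mpr dvd_rfl]
  · simp_rw [← hgeom]
    have hsum' : ∑ μ ∈ f.support, f μ = b i := hsum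
    rw [← Finsupp.finsetSum_apply, ← map_sum, hsum', b.repr_self, Finsupp.single_apply]
    exact if_congr (eq_comm.trans Equiv.Perm.pow_inv_apply_eq_self_iff) rfl rfl

theorem mem_iSup_eigenspace_of_isPrimitiveRoot (hperm : ∀ i, θ (b i) = b (e i)) {i : ι}
    (hi : 0 < minimalPeriod e i) {ζ : k} (hζ : IsPrimitiveRoot ζ (minimalPeriod e i)) :
    b i ∈ ⨆ μ, θ.eigenspace μ := by
  refine Module.End.mem_iSup_eigenspace_of_pow_apply_eq_self hζ hi ?_
  rw [b.pow_apply_basis_of_forall_apply_basis_eq hperm, Equiv.Perm.coe_pow,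
    iterate_minimalPeriod]

end Module.Basis

/-- Let `θ` be a linear automorphism of a `k`-vector space `V` permuting a
basis `b` of `V` (via a permutation `e` of the index set), with all `⟨θ⟩`-orbits of the basis
finite.  Then `θ` is diagonalizable (`V` is the sum of the eigenspaces of `θ`) if and only if
for every orbit length `r` occurring, `k` contains a primitive `r`-th root of unity. -/
theorem stmt6 (k V ι : Type) [Field k] [AddCommGroup V] [Module k V]
    (b : Module.Basis ι k V) (θ : V ≃ₗ[k] V) (e : Equiv.Perm ι)
    (hperm : ∀ i, θ (b i) = b (e i))
    (horb : ∀ i, 0 < Function.minimalPeriod e i) :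
    (⨆ μ : k, Module.End.eigenspace (θ : V →ₗ[k] V) μ) = ⊤ ↔
      ∀ i : ι, ∃ ζ : k, IsPrimitiveRoot ζ (Function.minimalPeriod e i) := by
  constructor
  · intro htop i
    exact b.exists_isPrimitiveRoot_of_mem_iSup_eigenspace hperm (horb i)
      (htop ▸ Submodule.mem_top)
  · intro hroot
    rw [eq_top_iff, ← b.span_eq, Submodule.span_le]
    rintro _ ⟨i, rfl⟩
    obtain ⟨ζ, hζ⟩ := hroot i
    exact b.mem_iSup_eigenspace_of_isPrimitiveRoot hperm (horb i) hζ
end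

section
/- Let G be a finite abelian group of order n acting on a k-algebra B that is a finite product of copies of k (with k containing a primitive n-th root of unity), via algebra automorphisms. Let F be the basis of primitive orthogonal idempotents of B. Then G permutes F, every G-orbit length in F divides |G|, and the smash product B # k[G] is a semisimple algebra isomorphic to ⊕_{ℓ=1}^t (|G|/n_ℓ) · M_{n_ℓ}(k), where n_1, …, n_t are the lengths of the G-orbits of F. -/
/-!
Let `o` be a `G`-orbit in `F` with stabilizer `H`, and let `ψ` be a character of `G`. Letting
`b : F → k` act on `o → k` by multiplication and `g` by `v ↦ ψ g • v ∘ (g⁻¹ • ·)` gives a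
covariant pair, hence an algebra map `B # k[G] → End(o → k)`, sending `δ_f # g` to the operator
with matrix entry `ψ g` at `(f, g⁻¹ f)`. Extending every character `χ` of `H` to some `ψ` yields
`A → ∏_{o, χ} End(o → k)`. Its matrix entry at `(f, g₀⁻¹ f)` is `ψ g₀ · ∑_{h ∈ H} c(f, h g₀) χ h`,
where `c` are the coordinates in the basis `δ_f # g`; since the `|H|` characters of `H` are
linearly independent they span `H → k`, so the map is injective. Both sides have dimension
`|G| |F|`, because `∑_o |H_o| |o|² = ∑_o |G| |o|`, so it is an isomorphism.
-/

open MulAction Module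

section Characters

variable {k H : Type*} [Field k] [CommGroup H] [Fintype H]
  [HasEnoughRootsOfUnity k (Monoid.exponent H)]

theorem span_range_monoidHom_eq_top :
    Submodule.span k (Set.range fun (χ : H →* kˣ) (h : H) => (χ h : k)) = ⊤ := by
  have hli : LinearIndependent k fun (χ : H →* kˣ) (h : H) => (χ h : k) :=
    (linearIndependent_monoidHom H k).comp (fun χ => (Units.coeHom k).comp χ)
      fun χ χ' hχ => MonoidHom.ext fun h => Units.ext (DFunLike.congr_fun hχ h)
  have := Fintype.ofFinite (H →* kˣ)
  refine hli.span_eq_top_of_card_eq_finrank ?_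
  rw [finrank_pi, ← Nat.card_eq_fintype_card, ← Nat.card_eq_fintype_card,
    CommGroup.card_monoidHom_of_hasEnoughRootsOfUnity]

theorem eq_zero_of_forall_sum_mul_monoidHom_eq_zero {c : H → k}
    (hc : ∀ χ : H →* kˣ, ∑ h, c h * χ h = 0) : c = 0 := by
  classical
  let φ : (H → k) →ₗ[k] k := ∑ h, c h • LinearMap.proj h
  have hφ : φ = 0 := by
    refine LinearMap.ext_on_range span_range_monoidHom_eq_top fun χ => ?_
    simpa [φ] using hc χ
  funext h
  simpa [φ, Pi.single_apply] using LinearMap.congr_fun hφ (Pi.single h 1)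

end Characters

theorem IsPrimitiveRoot.hasEnoughRootsOfUnity_exponent {k G : Type*} [Field k] [Group G]
    [Fintype G] {ζ : k} (hζ : IsPrimitiveRoot ζ (Fintype.card G)) :
    HasEnoughRootsOfUnity k (Monoid.exponent G) :=
  have : HasEnoughRootsOfUnity k (Fintype.card G) := ⟨⟨ζ, hζ⟩, inferInstance⟩
  .of_dvd k Group.exponent_dvd_card

section ExtendCharacter

variable {G M : Type*} [CommGroup G] [Finite G] [CommMonoid M]
  [HasEnoughRootsOfUnity M (Monoid.exponent G)]

instance (H : Subgroup G) : HasEnoughRootsOfUnity M (Monoid.exponent H) :=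
  .of_dvd M (Monoid.exponent_submonoid_dvd H.toSubmonoid)

noncomputable def extendCharacter (H : Subgroup G) (χ : H →* Mˣ) : G →* Mˣ :=
  Function.surjInv (MonoidHom.domRestrict_surjective M H) χ

@[simp]
theorem extendCharacter_apply (H : Subgroup G) (χ : H →* Mˣ) (h : H) :
    extendCharacter H χ h = χ h :=
  DFunLike.congr_fun (Function.surjInv_eq (MonoidHom.domRestrict_surjective M H) χ) h

end ExtendCharacter

namespace MulAction

theorem sum_ite_inv_smul_eq {G X M : Type*} [Group G] [Fintype G] [MulAction G X]
    [DecidableEq X] [AddCommMonoid M] {x y : X} {H : Subgroup G} [Fintype H]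
    (hH : stabilizer G x = H) {g₀ : G} (hy : g₀⁻¹ • x = y) (φ : G → M) :
    ∑ g, (if g⁻¹ • x = y then φ g else 0) = ∑ h : H, φ (h * g₀) := by
  subst hH hy
  rw [← Equiv.sum_comp (Equiv.mulRight g₀)]
  simp only [Equiv.coe_mulRight, mul_inv_rev, mul_smul, smul_left_cancel_iff, inv_smul_eq_iff,
    eq_comm (a := x)]
  rw [← Finset.sum_filter]
  exact Finset.sum_subtype _ (by simp [mem_stabilizer_iff]) _

theorem stabilizer_eq_of_mem_orbit {G X : Type*} [CommGroup G] [MulAction G X] {x y : X}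
    (h : y ∈ orbit G x) : stabilizer G y = stabilizer G x := by
  obtain ⟨g, rfl⟩ := h
  exact stabilizer_smul_eq_right g x

variable {G X : Type*} [Group G] [MulAction G X]

theorem card_stabilizer_out_mul_card_orbit (o : orbitRel.Quotient G X) :
    Nat.card (stabilizer G o.out) * Nat.card o.orbit = Nat.card G := by
  rw [orbitRel.Quotient.orbit_eq_orbit_out o Quotient.out_eq', Nat.card_coe_set_eq,
    ← index_stabilizer, Subgroup.card_mul_index]

theorem card_orbit_dvd_card (o : orbitRel.Quotient G X) : Nat.card o.orbit ∣ Nat.card G :=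
  Dvd.intro_left _ (card_stabilizer_out_mul_card_orbit o)

theorem sum_card_orbit [Fintype X] [Fintype (orbitRel.Quotient G X)] :
    ∑ o : orbitRel.Quotient G X, Nat.card o.orbit = Nat.card X := by
  rw [← Nat.card_sigma, Nat.card_congr (selfEquivSigmaOrbits' G X)]

end MulAction

section TwistedPermutation

variable (k : Type*) {G X F : Type*} [CommRing k] [Group G] [MulAction G X]

noncomputable def twistedPermRep (ψ : G →* kˣ) : G →* Module.End k (X → k) where
  toFun g := (ψ g : k) • LinearMap.funLeft k k (g⁻¹ • · : X → X)
  map_one' := by ext; simp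
  map_mul' g g' := by ext v x; simp [mul_smul, mul_left_comm]

noncomputable def restrictMul (ι : X → F) : (F → k) →ₐ[k] Module.End k (X → k) :=
  (Algebra.lmul k (X → k)).comp (AlgHom.pi fun x => Pi.evalAlgHom k (fun _ => k) (ι x))

variable {k}

@[simp]
theorem twistedPermRep_apply (ψ : G →* kˣ) (g : G) (v : X → k) (x : X) :
    twistedPermRep k ψ g v x = ψ g * v (g⁻¹ • x) := rfl

@[simp]
theorem restrictMul_apply (ι : X → F) (b : F → k) (v : X → k) (x : X) :
    restrictMul k ι b v x = b (ι x) * v x := rfl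

theorem twistedPermRep_mul_restrictMul [MulAction G F] (ψ : G →* kˣ) {ι : X → F}
    (hι : ∀ (g : G) (x : X), ι (g • x) = g • ι x) (g : G) (b : F → k) :
    twistedPermRep k ψ g * restrictMul k ι b =
      restrictMul k ι (fun f => b (g⁻¹ • f)) * twistedPermRep k ψ g := by
  ext v x
  simp [hι, mul_left_comm]

end TwistedPermutation

namespace SmashProduct

section Lift

variable {k G F A R : Type*} [CommRing k] [Group G] [Ring R] [Algebra k R]

theorem mul_mul_eq_of_covariant [MulAction G F] {ρB : (F → k) →ₐ[k] R} {ρG : G →* R}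
    (hρ : ∀ (g : G) (b : F → k), ρG g * ρB b = ρB (fun f => b (g⁻¹ • f)) * ρG g)
    (b b' : F → k) (g g' : G) :
    ρB b * ρG g * (ρB b' * ρG g') = ρB (b * fun f => b' (g⁻¹ • f)) * ρG (g * g') := by
  rw [map_mul, map_mul, mul_assoc, ← mul_assoc (ρG g), hρ]
  simp only [mul_assoc]

variable [Fintype F] [DecidableEq F] [Ring A] [Algebra k A]
  {ιB : (F → k) →ₐ[k] A} {ιG : G →* A} {bA : Basis (F × G) k A}
  {ρB : (F → k) →ₐ[k] R} {ρG : G →* R}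

theorem constr_apply_mul (hbA : ∀ p : F × G, bA p = ιB (Pi.single p.1 1) * ιG p.2)
    (b : F → k) (g : G) :
    bA.constr k (fun p => ρB (Pi.single p.1 1) * ρG p.2) (ιB b * ιG g) = ρB b * ρG g := by
  have := (Pi.basisFun k F).ext
    (f₁ := (bA.constr k fun p => ρB (Pi.single p.1 1) * ρG p.2).comp
      ((LinearMap.mulRight k (ιG g)).comp ιB.toLinearMap))
    (f₂ := (LinearMap.mulRight k (ρG g)).comp ρB.toLinearMap) fun f => by
      simp [← hbA (f, g)]
  exact LinearMap.congr_fun this b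

variable [MulAction G F]

noncomputable def lift (hbA : ∀ p : F × G, bA p = ιB (Pi.single p.1 1) * ιG p.2)
    (hι : ∀ (g : G) (b : F → k), ιG g * ιB b = ιB (fun f => b (g⁻¹ • f)) * ιG g)
    (hρ : ∀ (g : G) (b : F → k), ρG g * ρB b = ρB (fun f => b (g⁻¹ • f)) * ρG g) :
    A →ₐ[k] R :=
  AlgHom.ofLinearMap (bA.constr k fun p => ρB (Pi.single p.1 1) * ρG p.2)
    (by simpa using constr_apply_mul (ρB := ρB) (ρG := ρG) hbA 1 1)
    (by
      rw [LinearMap.map_mul_iff]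
      refine bA.ext fun p => bA.ext fun q => ?_
      simp only [LinearMap.compr₂_apply, LinearMap.mul_apply', LinearMap.compl₂_apply,
        LinearMap.comp_apply, hbA, mul_mul_eq_of_covariant hι, mul_mul_eq_of_covariant hρ,
        constr_apply_mul hbA])

theorem lift_basis (hbA : ∀ p : F × G, bA p = ιB (Pi.single p.1 1) * ιG p.2)
    (hι : ∀ (g : G) (b : F → k), ιG g * ιB b = ιB (fun f => b (g⁻¹ • f)) * ιG g)
    (hρ : ∀ (g : G) (b : F → k), ρG g * ρB b = ρB (fun f => b (g⁻¹ • f)) * ρG g) (p : F × G) :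
    lift hbA hι hρ (bA p) = ρB (Pi.single p.1 1) * ρG p.2 :=
  bA.constr_basis k _ p

end Lift

section Model

variable (k G F : Type*) [Field k] [CommGroup G] [MulAction G F]

-- `Module.End k (o.orbit → k)` stands for `M_{|o|}(k)`; the characters of the stabilizer of `o`
-- (there are `|G| / |o|` of them) index its copies.
abbrev Model : Type _ :=
  ∀ o : orbitRel.Quotient G F, (stabilizer G o.out →* kˣ) → Module.End k (o.orbit → k)

variable {k G F} [Fintype G] [HasEnoughRootsOfUnity k (Monoid.exponent G)] [Fintype F]

theorem card_monoidHom_stabilizer_out (o : orbitRel.Quotient G F) :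
    Nat.card (stabilizer G o.out →* kˣ) = Fintype.card G / Nat.card o.orbit := by
  have : Nat.card o.orbit ≠ 0 :=
    have := (orbitRel.Quotient.nonempty_orbit o).to_subtype
    Nat.card_pos.ne'
  rw [CommGroup.card_monoidHom_of_hasEnoughRootsOfUnity, ← Nat.card_eq_fintype_card,
    Nat.eq_div_of_mul_eq_left this (card_stabilizer_out_mul_card_orbit o)]

open scoped Classical in
noncomputable def modelEquiv : Model k G F ≃ₐ[k] ((o : orbitRel.Quotient G F) →
    (Fin (Fintype.card G / Nat.card o.orbit) →
      Matrix (Fin (Nat.card o.orbit)) (Fin (Nat.card o.orbit)) k)) :=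
  AlgEquiv.piCongrRight fun o =>
    (AlgEquiv.piCongrRight fun _ => LinearMap.toMatrixAlgEquiv'.trans
      (Matrix.reindexAlgEquiv k k (Finite.equivFin o.orbit))).trans
    (AlgEquiv.piCongrLeft' k _ (Finite.equivFinOfCardEq (card_monoidHom_stabilizer_out o)))

theorem finrank_model : finrank k (Model k G F) = Nat.card G * Nat.card F := by
  classical
  have hcomponent (o : orbitRel.Quotient G F) :
      finrank k ((stabilizer G o.out →* kˣ) → Module.End k (o.orbit → k)) =
        Nat.card G * Nat.card o.orbit := by
    have := Fintype.ofFinite (stabilizer G o.out →* kˣ)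
    rw [finrank_pi_fintype, Finset.sum_const, Finset.card_univ, smul_eq_mul, finrank_linearMap,
      finrank_fintype_fun_eq_card, ← Nat.card_eq_fintype_card, ← Nat.card_eq_fintype_card,
      CommGroup.card_monoidHom_of_hasEnoughRootsOfUnity, ← mul_assoc,
      card_stabilizer_out_mul_card_orbit]
  have := Fintype.ofFinite (orbitRel.Quotient G F)
  rw [finrank_pi_fintype, Finset.sum_congr rfl fun o _ => hcomponent o, ← Finset.mul_sum,
    sum_card_orbit]

variable [DecidableEq F] {A : Type*} [Ring A] [Algebra k A]
  {ιB : (F → k) →ₐ[k] A} {ιG : G →* A} {bA : Basis (F × G) k A}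

noncomputable def toModel (hbA : ∀ p : F × G, bA p = ιB (Pi.single p.1 1) * ιG p.2)
    (hι : ∀ (g : G) (b : F → k), ιG g * ιB b = ιB (fun f => b (g⁻¹ • f)) * ιG g) :
    A →ₐ[k] Model k G F :=
  AlgHom.pi fun _ => AlgHom.pi fun χ =>
    lift hbA hι (twistedPermRep_mul_restrictMul (extendCharacter _ χ) (ι := Subtype.val)
      fun _ _ => rfl)

theorem toModel_apply_single (hbA : ∀ p : F × G, bA p = ιB (Pi.single p.1 1) * ιG p.2)
    (hι : ∀ (g : G) (b : F → k), ιG g * ιB b = ιB (fun f => b (g⁻¹ • f)) * ιG g) (a : A)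
    (o : orbitRel.Quotient G F) (χ : stabilizer G o.out →* kˣ) (x y : o.orbit) :
    toModel hbA hι a o χ (Pi.single y 1) x =
      ∑ g, if g⁻¹ • (x : F) = y then bA.repr a (x, g) * extendCharacter _ χ g else 0 := by
  nth_rewrite 1 [← bA.sum_repr a]
  simp only [toModel, map_sum, map_smul, AlgHom.pi_apply, lift_basis, Fintype.sum_prod_type,
    LinearMap.sum_apply, Finset.sum_apply, LinearMap.smul_apply, Module.End.mul_apply,
    Pi.smul_apply, restrictMul_apply, twistedPermRep_apply, Pi.single_apply, smul_eq_mul]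
  rw [Finset.sum_eq_single (x : F) (fun f _ hf => by simp [Ne.symm hf]) (by simp)]
  refine Finset.sum_congr rfl fun g _ => ?_
  simp only [Subtype.ext_iff, orbitRel.Quotient.orbit.coe_smul]
  split_ifs <;> simp [mul_comm]

theorem toModel_injective (hbA : ∀ p : F × G, bA p = ιB (Pi.single p.1 1) * ιG p.2)
    (hι : ∀ (g : G) (b : F → k), ιG g * ιB b = ιB (fun f => b (g⁻¹ • f)) * ιG g) :
    Function.Injective (toModel hbA hι) := by
  refine (injective_iff_map_eq_zero _).2 fun a ha => bA.repr.map_eq_zero_iff.1 ?_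
  ext ⟨f, g₀⟩
  set o : orbitRel.Quotient G F := Quotient.mk'' f
  have hf : f ∈ o.orbit := orbitRel.Quotient.mem_orbit.2 rfl
  have hH : stabilizer G f = stabilizer G o.out := stabilizer_eq_of_mem_orbit <| by
    rwa [← orbitRel.Quotient.orbit_eq_orbit_out o Quotient.out_eq']
  have := Fintype.ofFinite (stabilizer G o.out)
  have hchar (χ : stabilizer G o.out →* kˣ) :
      ∑ h : stabilizer G o.out, bA.repr a (f, h * g₀) * χ h = 0 := by
    let x : o.orbit := ⟨f, hf⟩
    have h0 := toModel_apply_single hbA hι a o χ x (g₀⁻¹ • x)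
    rw [ha, sum_ite_inv_smul_eq (x := (x : F)) (y := ((g₀⁻¹ • x : o.orbit) : F)) hH rfl] at h0
    simp only [Pi.zero_apply, LinearMap.zero_apply, map_mul, extendCharacter_apply,
      Units.val_mul, ← mul_assoc, ← Finset.sum_mul] at h0
    exact (mul_eq_zero.1 h0.symm).resolve_right (Units.ne_zero _)
  simpa using congrFun (eq_zero_of_forall_sum_mul_monoidHom_eq_zero hchar) 1

end Model

end SmashProduct

open SmashProduct in
/-- Let `G` be a finite abelian group of order `n` acting on the set `F`
(hence on the algebra `B = F → k`, a finite product of copies of `k`, by algebra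
automorphisms permuting the primitive orthogonal idempotents `F`), where `k` contains a
primitive `n`-th root of unity.  Let `A` be the smash product `B # k[G]` (presented as an
algebra `A` with structure maps `ιB`, `ιG` satisfying the smash product relations, free with
basis `{(δ_f # g)}`).  Then every `G`-orbit length in `F` divides `|G|` and `A` is a
semisimple algebra isomorphic to `⊕_{ℓ=1}^t (|G|/n_ℓ) · M_{n_ℓ}(k)`, the `n_ℓ` being the
orbit lengths. -/
theorem stmt12 (k G F A : Type) [Field k] [CommGroup G] [Fintype G] [Fintype F] [DecidableEq F]
    [MulAction G F]
    (lam : k) (hlam : IsPrimitiveRoot lam (Fintype.card G))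
    [Ring A] [Algebra k A]
    (ιB : (F → k) →ₐ[k] A) (ιG : G →* A)
    (hcomm : ∀ (g : G) (b : F → k), ιG g * ιB b = ιB (fun f => b (g⁻¹ • f)) * ιG g)
    (bA : Module.Basis (F × G) k A)
    (hbA : ∀ p : F × G, bA p = ιB (Pi.single p.1 1) * ιG p.2) :
    (∀ o : MulAction.orbitRel.Quotient G F, Nat.card o.orbit ∣ Fintype.card G) ∧
    IsSemisimpleRing A ∧
    Nonempty (A ≃ₐ[k] ((o : MulAction.orbitRel.Quotient G F) →
      (Fin (Fintype.card G / Nat.card o.orbit) →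
        Matrix (Fin (Nat.card o.orbit)) (Fin (Nat.card o.orbit)) k))) := by
  have := hlam.hasEnoughRootsOfUnity_exponent
  have := Module.Finite.of_basis bA
  have hinj := toModel_injective hbA hcomm
  have hrank : finrank k A = finrank k (Model k G F) := by
    rw [finrank_eq_card_basis bA, finrank_model, Fintype.card_prod, Nat.card_eq_fintype_card,
      Nat.card_eq_fintype_card, mul_comm]
  have hsurj := (LinearMap.injective_iff_surjective_of_finrank_eq_finrank
    (f := (toModel hbA hcomm).toLinearMap) hrank).1 hinj
  let e := (AlgEquiv.ofBijective _ ⟨hinj, hsurj⟩).trans modelEquiv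
  exact ⟨fun o => by simpa using card_orbit_dvd_card o, e.symm.toRingEquiv.isSemisimpleRing, ⟨e⟩⟩
end

section
/- Let G be a finite abelian group of order n, k a field containing a primitive n-th root of unity, H = k[G], B a left H-module algebra, and A = B # H. If I is an ideal of A, then I = ⊕_{m∈Ĝ} I_m # e_m, where I_m = {b ∈ B : b # e_m ∈ I}, each I_m is a left ideal and left H-submodule of B, and I_m · (e_{m-r}·B) ⊆ I_r for all r. Conversely, any family {I_m} of subspaces of B satisfying these conditions yields an ideal ⊕_m I_m # e_m of A. -/
/-!
Column orthogonality of `χ` gives `∑ₘ e_m = 1`, and reindexing the sum defining `e_m` gives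
`g e_m = χ_m(g)⁻¹ e_m`. With `g b = (g·b) g` these yield `(b # g) e_m = χ_m(g)⁻¹ b # e_m` and
`(b # e_m)(c # e_r) = b (e_{m r⁻¹}·c) # e_r`. Since `A` is spanned by the `c # g`, the first
formula shows `I e_m = I_m # e_m`, and a span of elements `b # e_m` is an ideal as soon as
multiplying its generators by the `c # g` on either side stays inside, which the two formulas
reduce to the conditions on the `J_m`.
-/

open Finset Submodule

theorem Submodule.mul_mem_of_forall_mul_mem {R A : Type*} [CommSemiring R] [Semiring A]
    [Algebra R A] {S T : Set A} {K : Submodule R A} (h : ∀ s ∈ S, ∀ t ∈ T, s * t ∈ K) {x y : A}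
    (hx : x ∈ span R S) (hy : y ∈ span R T) : x * y ∈ K := by
  have hST : span R S * span R T ≤ K := by
    rw [span_mul_span, span_le]
    rintro _ ⟨s, hs, t, ht, rfl⟩
    exact h s hs t ht
  exact hST (mul_mem_mul hx hy)

section SmashProduct

variable {k G B A : Type*} [Field k] [Group G] [Fintype G] [Ring B] [Algebra k B]
  [Ring A] [Algebra k A]

noncomputable def charIdempotent (χ : G →* G →* kˣ) (ιG : G →* A) (m : G) : A :=
  (Fintype.card G : k)⁻¹ • ∑ g : G, ((χ m g : kˣ) : k) • ιG g

noncomputable def charProjection (χ : G →* G →* kˣ) (τ : G →* (B ≃ₐ[k] B)) (m : G) :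
    B →ₗ[k] B :=
  (Fintype.card G : k)⁻¹ • ∑ g : G, ((χ m g : kˣ) : k) • (τ g).toLinearMap

variable {χ : G →* G →* kˣ} {τ : G →* (B ≃ₐ[k] B)} {ιB : B →ₐ[k] A} (ιG : G →* A)

theorem sum_charIdempotent (hχ' : ∀ g : G, g ≠ 1 → ∑ m : G, ((χ m g : kˣ) : k) = 0)
    (hcard : (Fintype.card G : k) ≠ 0) : ∑ m, charIdempotent χ ιG m = 1 := by
  simp only [charIdempotent, ← smul_sum]
  rw [sum_comm (f := fun m g => ((χ m g : kˣ) : k) • ιG g)]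
  simp only [← sum_smul]
  rw [sum_eq_single 1 (fun g _ hg => by rw [hχ' g hg, zero_smul]) (by simp)]
  simp [hcard]

theorem ιG_mul_charIdempotent (g m : G) :
    ιG g * charIdempotent χ ιG m = ((χ m g : kˣ) : k)⁻¹ • charIdempotent χ ιG m := by
  have hshift : ∑ h, ((χ m (g * h) : kˣ) : k) • ιG (g * h) = ∑ h, ((χ m h : kˣ) : k) • ιG h :=
    Fintype.sum_bijective _ (Group.mulLeft_bijective g) _ _ fun _ => rfl
  rw [charIdempotent, mul_smul_comm, mul_sum, ← hshift, smul_comm]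
  congr 1
  rw [smul_sum]
  refine sum_congr rfl fun h _ => ?_
  rw [mul_smul_comm, ← map_mul, map_mul (χ m), Units.val_mul, smul_smul,
    inv_mul_cancel_left₀ (Units.ne_zero _)]

theorem mul_ιG_mul_charIdempotent (x : A) (g m : G) :
    x * ιG g * charIdempotent χ ιG m = ((χ m g : kˣ) : k)⁻¹ • (x * charIdempotent χ ιG m) := by
  rw [mul_assoc, ιG_mul_charIdempotent, mul_smul_comm]

theorem ιG_mul_ιB_mul_charIdempotent
    (hcomm : ∀ (g : G) (b : B), ιG g * ιB b = ιB (τ g b) * ιG g) (g : G) (b : B) (m : G) :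
    ιG g * (ιB b * charIdempotent χ ιG m)
      = ((χ m g : kˣ) : k)⁻¹ • (ιB (τ g b) * charIdempotent χ ιG m) := by
  rw [← mul_assoc, hcomm, mul_ιG_mul_charIdempotent]

theorem charIdempotent_mul_ιB_mul_charIdempotent
    (hcomm : ∀ (g : G) (b : B), ιG g * ιB b = ιB (τ g b) * ιG g) (c : B) (m r : G) :
    charIdempotent χ ιG m * ιB c * charIdempotent χ ιG r
      = ιB (charProjection χ τ (m * r⁻¹) c) * charIdempotent χ ιG r := by
  rw [charIdempotent, charProjection]
  simp only [smul_mul_assoc, sum_mul, LinearMap.smul_apply, LinearMap.sum_apply,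
    AlgEquiv.toLinearMap_apply, map_smul, map_sum]
  congr 1
  refine sum_congr rfl fun g _ => ?_
  rw [hcomm, mul_ιG_mul_charIdempotent, smul_smul, map_mul, map_inv,
    MonoidHom.mul_apply, MonoidHom.inv_apply, Units.val_mul, Units.val_inv_eq_inv_val]

theorem ιB_mul_charIdempotent_mul_ιB_mul_charIdempotent
    (hcomm : ∀ (g : G) (b : B), ιG g * ιB b = ιB (τ g b) * ιG g) (b c : B) (m r : G) :
    ιB b * charIdempotent χ ιG m * (ιB c * charIdempotent χ ιG r)
      = ιB (b * charProjection χ τ (m * r⁻¹) c) * charIdempotent χ ιG r := by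
  rw [map_mul, mul_assoc (ιB b) (ιB _), ← charIdempotent_mul_ιB_mul_charIdempotent ιG hcomm]
  simp only [mul_assoc]

theorem ιB_mul_charIdempotent_mul_ιB_mul_ιG
    (hcomm : ∀ (g : G) (b : B), ιG g * ιB b = ιB (τ g b) * ιG g)
    (hχ' : ∀ g : G, g ≠ 1 → ∑ m : G, ((χ m g : kˣ) : k) = 0) (hcard : (Fintype.card G : k) ≠ 0)
    (b c : B) (m g : G) :
    ιB b * charIdempotent χ ιG m * (ιB c * ιG g) = ∑ r, ιB (b * charProjection χ τ (m * r⁻¹)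
      (((χ r g : kˣ) : k)⁻¹ • c)) * charIdempotent χ ιG r := by
  conv_lhs => rw [← mul_one (ιB c * ιG g), ← sum_charIdempotent ιG hχ' hcard, mul_sum, mul_sum]
  refine sum_congr rfl fun r _ => ?_
  rw [mul_ιG_mul_charIdempotent, ← smul_mul_assoc, ← map_smul,
    ιB_mul_charIdempotent_mul_ιB_mul_charIdempotent ιG hcomm]

theorem exists_ιB_mul_charIdempotent_eq
    (hA : span k (Set.range fun p : B × G => ιB p.1 * ιG p.2) = ⊤) (x : A) (m : G) :
    ∃ b, x * charIdempotent χ ιG m = ιB b * charIdempotent χ ιG m := by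
  have hx : x * charIdempotent χ ιG m ∈
      LinearMap.range (LinearMap.mulRight k (charIdempotent χ ιG m) ∘ₗ ιB.toLinearMap) := by
    refine mul_mem_of_forall_mul_mem ?_ (hA ▸ mem_top) (mem_span_singleton_self _)
    rintro _ ⟨⟨b, g⟩, rfl⟩ _ rfl
    exact ⟨((χ m g : kˣ) : k)⁻¹ • b, by simp [mul_ιG_mul_charIdempotent]⟩
  obtain ⟨b, hb⟩ := hx
  exact ⟨b, hb.symm⟩

variable (χ ιB) in
def smashSpan (J : G → Submodule k B) : Submodule k A :=
  span k {x : A | ∃ m : G, ∃ b ∈ J m, x = ιB b * charIdempotent χ ιG m}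

theorem ιB_mul_charIdempotent_mem_smashSpan {J : G → Submodule k B} {m : G} {b : B}
    (hb : b ∈ J m) : ιB b * charIdempotent χ ιG m ∈ smashSpan χ ιB ιG J :=
  subset_span ⟨m, b, hb, rfl⟩

theorem mul_mem_smashSpan
    (hcomm : ∀ (g : G) (b : B), ιG g * ιB b = ιB (τ g b) * ιG g)
    (hA : span k (Set.range fun p : B × G => ιB p.1 * ιG p.2) = ⊤) {J : G → Submodule k B}
    (hleft : ∀ m : G, ∀ c : B, ∀ b ∈ J m, c * b ∈ J m)
    (hτ : ∀ m : G, ∀ g : G, ∀ b ∈ J m, τ g b ∈ J m) (a : A) {x : A}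
    (hx : x ∈ smashSpan χ ιB ιG J) : a * x ∈ smashSpan χ ιB ιG J := by
  refine mul_mem_of_forall_mul_mem ?_ (hA ▸ mem_top) hx
  rintro _ ⟨⟨c, g⟩, rfl⟩ _ ⟨m, b, hb, rfl⟩
  rw [mul_assoc, ιG_mul_ιB_mul_charIdempotent ιG hcomm, mul_smul_comm, ← mul_assoc, ← map_mul]
  exact smul_mem _ _ (ιB_mul_charIdempotent_mem_smashSpan ιG (hleft m c _ (hτ m g b hb)))

theorem smashSpan_mul_mem
    (hcomm : ∀ (g : G) (b : B), ιG g * ιB b = ιB (τ g b) * ιG g)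
    (hχ' : ∀ g : G, g ≠ 1 → ∑ m : G, ((χ m g : kˣ) : k) = 0) (hcard : (Fintype.card G : k) ≠ 0)
    (hA : span k (Set.range fun p : B × G => ιB p.1 * ιG p.2) = ⊤) {J : G → Submodule k B}
    (hproj : ∀ m r : G, ∀ b ∈ J m, ∀ c : B, b * charProjection χ τ (m * r⁻¹) c ∈ J r)
    (a : A) {x : A} (hx : x ∈ smashSpan χ ιB ιG J) : x * a ∈ smashSpan χ ιB ιG J := by
  refine mul_mem_of_forall_mul_mem ?_ hx (hA ▸ mem_top)
  rintro _ ⟨m, b, hb, rfl⟩ _ ⟨⟨c, g⟩, rfl⟩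
  rw [ιB_mul_charIdempotent_mul_ιB_mul_ιG ιG hcomm hχ' hcard]
  exact sum_mem fun r _ => ιB_mul_charIdempotent_mem_smashSpan ιG (hproj m r b hb _)

end SmashProduct

theorem stmt13_general (k G B A ι : Type) [Field k] [CommGroup G] [Fintype G]
    (χ : G →* G →* kˣ)
    (hχ' : ∀ g : G, g ≠ 1 → ∑ m : G, ((χ m g : kˣ) : k) = 0)
    (hcard : (Fintype.card G : k) ≠ 0)
    [Ring B] [Algebra k B] (τ : G →* (B ≃ₐ[k] B))
    [Ring A] [Algebra k A] (ιB : B →ₐ[k] A) (ιG : G →* A)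
    (hcomm : ∀ (g : G) (b : B), ιG g * ιB b = ιB (τ g b) * ιG g)
    (bB : Module.Basis ι k B) (bA : Module.Basis (ι × G) k A)
    (hbA : ∀ p : ι × G, bA p = ιB (bB p.1) * ιG p.2)
    (e : G → A)
    (he : ∀ m : G, e m = (Fintype.card G : k)⁻¹ • ∑ g : G, ((χ m g : kˣ) : k) • ιG g)
    (actE : G → B →ₗ[k] B)
    (hactE : ∀ m : G, actE m =
      (Fintype.card G : k)⁻¹ • ∑ g : G, ((χ m g : kˣ) : k) • (τ g).toLinearMap) :
    -- part (a): ideals decompose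
    (∀ I : Submodule k A, (∀ (a x : A), x ∈ I → a * x ∈ I ∧ x * a ∈ I) →
      ((∀ x ∈ I, (∀ m : G, x * e m ∈ I) ∧ x = ∑ m : G, x * e m) ∧
       (∀ x ∈ I, ∀ m : G, ∃ b : B, ιB b * e m ∈ I ∧ x * e m = ιB b * e m) ∧
       (∀ m : G, ∀ b c : B, ιB b * e m ∈ I → (ιB (c * b) * e m ∈ I ∧
          (∀ g : G, ιB (τ g b) * e m ∈ I) ∧ (∀ r : k, ιB (r • b) * e m ∈ I) ∧
          (∀ b' : B, ιB b' * e m ∈ I → ιB (b + b') * e m ∈ I))) ∧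
       (∀ m r : G, ∀ b : B, ιB b * e m ∈ I →
          ∀ c : B, ιB (b * actE (m * r⁻¹) c) * e r ∈ I))) ∧
    -- part (b): converse
    (∀ J : G → Submodule k B,
      (∀ m : G, ∀ c : B, ∀ b ∈ J m, c * b ∈ J m) →
      (∀ m : G, ∀ g : G, ∀ b ∈ J m, τ g b ∈ J m) →
      (∀ m r : G, ∀ b ∈ J m, ∀ c : B, b * actE (m * r⁻¹) c ∈ J r) →
      (∀ (a x : A),
        x ∈ Submodule.span k {x : A | ∃ m : G, ∃ b ∈ J m, x = ιB b * e m} →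
        a * x ∈ Submodule.span k {x : A | ∃ m : G, ∃ b ∈ J m, x = ιB b * e m} ∧
        x * a ∈ Submodule.span k {x : A | ∃ m : G, ∃ b ∈ J m, x = ιB b * e m})) := by
  obtain rfl : e = charIdempotent χ ιG := funext he
  obtain rfl : actE = charProjection χ τ := funext hactE
  have hA : span k (Set.range fun p : B × G => ιB p.1 * ιG p.2) = ⊤ :=
    eq_top_mono (span_mono (by rintro _ ⟨p, rfl⟩; exact ⟨(bB p.1, p.2), (hbA p).symm⟩))
      bA.span_eq
  refine ⟨fun I hI => ⟨fun x hx => ⟨fun m => (hI _ x hx).2, ?_⟩, fun x hx m => ?_,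
    fun m b c hb => ⟨?_, fun g => ?_, fun r => ?_, fun b' hb' => ?_⟩, fun m r b hb c => ?_⟩,
    fun J hleft hτ hproj a x hx =>
      ⟨mul_mem_smashSpan ιG hcomm hA hleft hτ a hx,
        smashSpan_mul_mem ιG hcomm hχ' hcard hA hproj a hx⟩⟩
  · rw [← mul_sum, sum_charIdempotent ιG hχ' hcard, mul_one]
  · obtain ⟨b, hb⟩ := exists_ιB_mul_charIdempotent_eq ιG hA x m
    exact ⟨b, hb ▸ (hI _ x hx).2, hb⟩
  · simpa only [map_mul, mul_assoc] using (hI (ιB c) _ hb).1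
  · have h := (hI (ιG g) _ hb).1
    rwa [ιG_mul_ιB_mul_charIdempotent ιG hcomm, smul_mem_iff _ (inv_ne_zero (Units.ne_zero _))]
      at h
  · rw [map_smul, smul_mul_assoc]
    exact I.smul_mem r hb
  · rw [map_add, add_mul]
    exact I.add_mem hb hb'
  · rw [← ιB_mul_charIdempotent_mul_ιB_mul_charIdempotent ιG hcomm]
    exact (hI _ _ hb).2

/-- Let `G` be a finite abelian group of order `n`, `k` a field containing
a primitive `n`-th root of unity (with a perfect character pairing `χ` of `G`), `H = k[G]`,
`B` a left `H`-module algebra (via the action `τ` of `G` by algebra automorphisms), and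
`A = B # H` the smash product (presented by `ιB`, `ιG` with the smash relations and the
standard freeness).  Let `{e_m}_{m ∈ Ĝ}` be the character idempotents of `k[G]` inside `A`,
and `actE m` the action of `e_m` on `B`.  If `I` is a (two-sided) ideal of `A` then
`I = ⊕_m I_m # e_m` where `I_m = {b : ιB b * e_m ∈ I}`, each `I_m` is a left ideal and left
`H`-submodule of `B`, and `I_m (e_{m r⁻¹}·B) ⊆ I_r` for all `r`.  Conversely any family
`{J_m}` of subspaces of `B` satisfying these conditions yields an ideal
`⊕_m J_m # e_m` of `A`. -/
theorem stmt13 (k G B A ι : Type) [Field k] [CommGroup G] [Fintype G]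
    (χ : G →* G →* kˣ)
    (hχ : ∀ m : G, m ≠ 1 → ∑ g : G, ((χ m g : kˣ) : k) = 0)
    (hχ' : ∀ g : G, g ≠ 1 → ∑ m : G, ((χ m g : kˣ) : k) = 0)
    (hroot : ∃ lam : k, IsPrimitiveRoot lam (Fintype.card G))
    (hcard : (Fintype.card G : k) ≠ 0)
    [Ring B] [Algebra k B] (τ : G →* (B ≃ₐ[k] B))
    [Ring A] [Algebra k A] (ιB : B →ₐ[k] A) (ιG : G →* A)
    (hcomm : ∀ (g : G) (b : B), ιG g * ιB b = ιB (τ g b) * ιG g)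
    (bB : Module.Basis ι k B) (bA : Module.Basis (ι × G) k A)
    (hbA : ∀ p : ι × G, bA p = ιB (bB p.1) * ιG p.2)
    (e : G → A)
    (he : ∀ m : G, e m = (Fintype.card G : k)⁻¹ • ∑ g : G, ((χ m g : kˣ) : k) • ιG g)
    (actE : G → B →ₗ[k] B)
    (hactE : ∀ m : G, actE m =
      (Fintype.card G : k)⁻¹ • ∑ g : G, ((χ m g : kˣ) : k) • (τ g).toLinearMap) :
    -- part (a): ideals decompose
    (∀ I : Submodule k A, (∀ (a x : A), x ∈ I → a * x ∈ I ∧ x * a ∈ I) →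
      ((∀ x ∈ I, (∀ m : G, x * e m ∈ I) ∧ x = ∑ m : G, x * e m) ∧
       (∀ x ∈ I, ∀ m : G, ∃ b : B, ιB b * e m ∈ I ∧ x * e m = ιB b * e m) ∧
       (∀ m : G, ∀ b c : B, ιB b * e m ∈ I → (ιB (c * b) * e m ∈ I ∧
          (∀ g : G, ιB (τ g b) * e m ∈ I) ∧ (∀ r : k, ιB (r • b) * e m ∈ I) ∧
          (∀ b' : B, ιB b' * e m ∈ I → ιB (b + b') * e m ∈ I))) ∧
       (∀ m r : G, ∀ b : B, ιB b * e m ∈ I →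
          ∀ c : B, ιB (b * actE (m * r⁻¹) c) * e r ∈ I))) ∧
    -- part (b): converse
    (∀ J : G → Submodule k B,
      (∀ m : G, ∀ c : B, ∀ b ∈ J m, c * b ∈ J m) →
      (∀ m : G, ∀ g : G, ∀ b ∈ J m, τ g b ∈ J m) →
      (∀ m r : G, ∀ b ∈ J m, ∀ c : B, b * actE (m * r⁻¹) c ∈ J r) →
      (∀ (a x : A),
        x ∈ Submodule.span k {x : A | ∃ m : G, ∃ b ∈ J m, x = ιB b * e m} →
        a * x ∈ Submodule.span k {x : A | ∃ m : G, ∃ b ∈ J m, x = ιB b * e m} ∧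
        x * a ∈ Submodule.span k {x : A | ∃ m : G, ∃ b ∈ J m, x = ιB b * e m})) :=
  stmt13_general k G B A ι χ hχ' hcard τ ιB ιG hcomm bB bA hbA e he actE hactE
end

section
/- Let G be a finite abelian group of order n with character-idempotents e_m ∈ k[G] (k containing a primitive n-th root of unity), B a left k[G]-module algebra, and A = B # k[G]. If L is a left ideal of B that is also a left k[G]-submodule, then L # e_m is a left ideal of A for every m, and the two-sided ideal of A generated by L # e_m equals (L # e_m)(B # 1). -/
/-!
The character element `e_m = |G|⁻¹ ∑ χ_m(g) g` is an eigenvector of both left and right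
multiplication by every `g ∈ G`, with eigenvalue `χ_m(g)⁻¹`. Hence `g (b e_m)` is a multiple
of `(g·b) e_m`, and, after commuting `g` past `B`, `(b e_m c) (c' g)` is a multiple of
`b e_m (g⁻¹·(c c'))`. Since `A` is spanned by the products `c g`, this shows that `L # e_m` is a
left ideal and that `(L # e_m)(B # 1)` is a two-sided ideal; it contains `L # e_m` and is
contained in every two-sided ideal that does.
-/

open Submodule

section CharacterSum

variable {k G A : Type*} [CommRing k] [Group G] [Fintype G] [Ring A] [Algebra k A]

theorem sum_char_smul_mul (χ : G →* kˣ) (ι : G →* A) (h : G) :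
    (∑ g, (χ g : k) • ι g) * ι h = (χ h⁻¹ : k) • ∑ g, (χ g : k) • ι g := by
  rw [Finset.sum_mul, Finset.smul_sum]
  refine Fintype.sum_equiv (Equiv.mulRight h) _ _ fun g => ?_
  rw [Equiv.coe_mulRight, smul_mul_assoc, ← map_mul, smul_smul, mul_comm, ← Units.val_mul,
    ← map_mul, mul_inv_cancel_right]

theorem mul_sum_char_smul (χ : G →* kˣ) (ι : G →* A) (h : G) :
    ι h * ∑ g, (χ g : k) • ι g = (χ h⁻¹ : k) • ∑ g, (χ g : k) • ι g := by
  rw [Finset.mul_sum, Finset.smul_sum]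
  refine Fintype.sum_equiv (Equiv.mulLeft h) _ _ fun g => ?_
  rw [Equiv.coe_mulLeft, mul_smul_comm, ← map_mul, smul_smul, ← Units.val_mul,
    ← map_mul, inv_mul_cancel_left]

end CharacterSum

section Span

variable {k A : Type*} [CommSemiring k] [Semiring A] [Algebra k A] {s t : Set A}

theorem mul_left_mem_span_of_forall (ht : span k t = ⊤)
    (h : ∀ a ∈ t, ∀ y ∈ s, a * y ∈ span k s) (a : A) {x : A} (hx : x ∈ span k s) :
    a * x ∈ span k s := by
  have hax : a * x ∈ span k t * span k s := mul_mem_mul (ht ▸ mem_top) hx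
  rw [span_mul_span] at hax
  refine span_le.2 ?_ hax
  rintro _ ⟨a, ha, y, hy, rfl⟩
  exact h a ha y hy

theorem mul_right_mem_span_of_forall (ht : span k t = ⊤)
    (h : ∀ a ∈ t, ∀ y ∈ s, y * a ∈ span k s) (a : A) {x : A} (hx : x ∈ span k s) :
    x * a ∈ span k s := by
  have hxa : x * a ∈ span k s * span k t := mul_mem_mul hx (ht ▸ mem_top)
  rw [span_mul_span] at hxa
  refine span_le.2 ?_ hxa
  rintro _ ⟨y, hy, a, ha, rfl⟩
  exact h a ha y hy

end Span

section SmashProduct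

variable {k G B A : Type*} [CommRing k] [Group G] [Ring B] [Algebra k B] [Ring A] [Algebra k A]
  {τ : G →* (B ≃ₐ[k] B)} {ιB : B →ₐ[k] A} {ιG : G →* A} {e : A} {μ : G → k} {L : Set B}

theorem ιB_mul_ιG
    (hcomm : ∀ (g : G) (b : B), ιG g * ιB b = ιB (τ g b) * ιG g)
    (g : G) (c : B) : ιB c * ιG g = ιG g * ιB (τ g⁻¹ c) := by
  rw [hcomm, ← AlgEquiv.mul_apply, ← map_mul, mul_inv_cancel, map_one, AlgEquiv.one_apply]

theorem ιG_mul_ιB_mul_of_ιG_mul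
    (hcomm : ∀ (g : G) (b : B), ιG g * ιB b = ιB (τ g b) * ιG g)
    (hleft : ∀ g, ιG g * e = μ g • e) (g : G) (b : B) :
    ιG g * (ιB b * e) = μ g • (ιB (τ g b) * e) := by
  rw [← mul_assoc, hcomm, mul_assoc, hleft, mul_smul_comm]

theorem mul_left_mem_span_smash
    (hcomm : ∀ (g : G) (b : B), ιG g * ιB b = ιB (τ g b) * ιG g)
    (hgen : span k (Set.range fun p : B × G => ιB p.1 * ιG p.2) = ⊤)
    (hLideal : ∀ c : B, ∀ b ∈ L, c * b ∈ L) (hLmod : ∀ g : G, ∀ b ∈ L, τ g b ∈ L)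
    (hleft : ∀ g, ιG g * e = μ g • e) (a : A) {x : A}
    (hx : x ∈ span k {x | ∃ b ∈ L, x = ιB b * e}) :
    a * x ∈ span k {x | ∃ b ∈ L, x = ιB b * e} := by
  refine mul_left_mem_span_of_forall hgen ?_ a hx
  rintro _ ⟨⟨c, g⟩, rfl⟩ _ ⟨b, hb, rfl⟩
  rw [mul_assoc, ιG_mul_ιB_mul_of_ιG_mul hcomm hleft, mul_smul_comm, ← mul_assoc, ← map_mul]
  exact smul_mem _ _ (subset_span ⟨_, hLideal c _ (hLmod g b hb), rfl⟩)

theorem mul_left_mem_span_smash_mul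
    (hcomm : ∀ (g : G) (b : B), ιG g * ιB b = ιB (τ g b) * ιG g)
    (hgen : span k (Set.range fun p : B × G => ιB p.1 * ιG p.2) = ⊤)
    (hLideal : ∀ c : B, ∀ b ∈ L, c * b ∈ L) (hLmod : ∀ g : G, ∀ b ∈ L, τ g b ∈ L)
    (hleft : ∀ g, ιG g * e = μ g • e) (a : A) {x : A}
    (hx : x ∈ span k {x | ∃ b ∈ L, ∃ c : B, x = ιB b * e * ιB c}) :
    a * x ∈ span k {x | ∃ b ∈ L, ∃ c : B, x = ιB b * e * ιB c} := by
  refine mul_left_mem_span_of_forall hgen ?_ a hx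
  rintro _ ⟨⟨c', g⟩, rfl⟩ _ ⟨b, hb, c, rfl⟩
  rw [mul_assoc, ← mul_assoc (ιG g), ιG_mul_ιB_mul_of_ιG_mul hcomm hleft, smul_mul_assoc,
    mul_smul_comm, ← mul_assoc, ← mul_assoc, ← map_mul]
  exact smul_mem _ _ (subset_span ⟨_, hLideal c' _ (hLmod g b hb), c, rfl⟩)

theorem mul_right_mem_span_smash_mul
    (hcomm : ∀ (g : G) (b : B), ιG g * ιB b = ιB (τ g b) * ιG g)
    (hgen : span k (Set.range fun p : B × G => ιB p.1 * ιG p.2) = ⊤)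
    (hright : ∀ g, e * ιG g = μ g • e) (a : A) {x : A}
    (hx : x ∈ span k {x | ∃ b ∈ L, ∃ c : B, x = ιB b * e * ιB c}) :
    x * a ∈ span k {x | ∃ b ∈ L, ∃ c : B, x = ιB b * e * ιB c} := by
  refine mul_right_mem_span_of_forall hgen ?_ a hx
  rintro _ ⟨⟨c', g⟩, rfl⟩ _ ⟨b, hb, c, rfl⟩
  rw [← mul_assoc, mul_assoc _ (ιB c), ← map_mul, mul_assoc _ (ιB (c * c')),
    ιB_mul_ιG hcomm, ← mul_assoc, mul_assoc (ιB b), hright, mul_smul_comm, smul_mul_assoc]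
  exact smul_mem _ _ (subset_span ⟨b, hb, _, rfl⟩)

end SmashProduct

theorem stmt14_general (k G B A ι : Type) [Field k] [CommGroup G] [Fintype G]
    (χ : G →* G →* kˣ)
    [Ring B] [Algebra k B] (τ : G →* (B ≃ₐ[k] B))
    [Ring A] [Algebra k A] (ιB : B →ₐ[k] A) (ιG : G →* A)
    (hcomm : ∀ (g : G) (b : B), ιG g * ιB b = ιB (τ g b) * ιG g)
    (bB : Module.Basis ι k B) (bA : Module.Basis (ι × G) k A)
    (hbA : ∀ p : ι × G, bA p = ιB (bB p.1) * ιG p.2)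
    (e : G → A)
    (he : ∀ m : G, e m = (Fintype.card G : k)⁻¹ • ∑ g : G, ((χ m g : kˣ) : k) • ιG g)
    (L : Submodule k B)
    (hLideal : ∀ c : B, ∀ b ∈ L, c * b ∈ L)
    (hLmod : ∀ g : G, ∀ b ∈ L, τ g b ∈ L)
    (m : G) :
    (∀ a : A, ∀ x ∈ Submodule.span k {x : A | ∃ b ∈ L, x = ιB b * e m},
      a * x ∈ Submodule.span k {x : A | ∃ b ∈ L, x = ιB b * e m}) ∧
    (Submodule.span k {x : A | ∃ b ∈ L, x = ιB b * e m}
        ≤ Submodule.span k {x : A | ∃ b ∈ L, ∃ c : B, x = (ιB b * e m) * ιB c} ∧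
      (∀ (a x : A), x ∈ Submodule.span k {x : A | ∃ b ∈ L, ∃ c : B, x = (ιB b * e m) * ιB c} →
        a * x ∈ Submodule.span k {x : A | ∃ b ∈ L, ∃ c : B, x = (ιB b * e m) * ιB c} ∧
        x * a ∈ Submodule.span k {x : A | ∃ b ∈ L, ∃ c : B, x = (ιB b * e m) * ιB c}) ∧
      (∀ J : Submodule k A, (∀ (a x : A), x ∈ J → a * x ∈ J ∧ x * a ∈ J) →
        Submodule.span k {x : A | ∃ b ∈ L, x = ιB b * e m} ≤ J →
        Submodule.span k {x : A | ∃ b ∈ L, ∃ c : B, x = (ιB b * e m) * ιB c} ≤ J)) := by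
  have hgen : span k (Set.range fun p : B × G => ιB p.1 * ιG p.2) = ⊤ :=
    top_unique <| bA.span_eq.symm.le.trans <| span_mono <| by
      rintro _ ⟨p, rfl⟩
      exact ⟨(bB p.1, p.2), (hbA p).symm⟩
  have hleft (g : G) : ιG g * e m = ((χ m g⁻¹ : kˣ) : k) • e m := by
    rw [he, mul_smul_comm, mul_sum_char_smul, smul_comm]
  have hright (g : G) : e m * ιG g = ((χ m g⁻¹ : kˣ) : k) • e m := by
    rw [he, smul_mul_assoc, sum_char_smul_mul, smul_comm]
  refine ⟨fun a x => mul_left_mem_span_smash hcomm hgen hLideal hLmod hleft a, span_le.2 ?_,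
    fun a x hx => ⟨mul_left_mem_span_smash_mul hcomm hgen hLideal hLmod hleft a hx,
      mul_right_mem_span_smash_mul hcomm hgen hright a hx⟩,
    fun J hJ hSJ => span_le.2 ?_⟩
  · rintro _ ⟨b, hb, rfl⟩
    exact subset_span ⟨b, hb, 1, by rw [map_one, mul_one]⟩
  · rintro _ ⟨b, hb, c, rfl⟩
    exact (hJ (ιB c) _ (hSJ (subset_span ⟨b, hb, rfl⟩))).2

/-- Let `G` be a finite abelian group with character idempotents
`e_m ∈ k[G]` (`k` containing a primitive `|G|`-th root of unity), `B` a left `k[G]`-module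
algebra and `A = B # k[G]` the smash product (presented by `ιB`, `ιG`).  If `L` is a left
ideal of `B` that is also a left `k[G]`-submodule, then `L # e_m` is a left ideal of `A` for
every `m`, and the two-sided ideal of `A` generated by `L # e_m` equals
`(L # e_m)(B # 1)`. -/
theorem stmt14 (k G B A ι : Type) [Field k] [CommGroup G] [Fintype G]
    (χ : G →* G →* kˣ)
    (hχ : ∀ m : G, m ≠ 1 → ∑ g : G, ((χ m g : kˣ) : k) = 0)
    (hχ' : ∀ g : G, g ≠ 1 → ∑ m : G, ((χ m g : kˣ) : k) = 0)
    (hroot : ∃ lam : k, IsPrimitiveRoot lam (Fintype.card G))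
    (hcard : (Fintype.card G : k) ≠ 0)
    [Ring B] [Algebra k B] (τ : G →* (B ≃ₐ[k] B))
    [Ring A] [Algebra k A] (ιB : B →ₐ[k] A) (ιG : G →* A)
    (hcomm : ∀ (g : G) (b : B), ιG g * ιB b = ιB (τ g b) * ιG g)
    (bB : Module.Basis ι k B) (bA : Module.Basis (ι × G) k A)
    (hbA : ∀ p : ι × G, bA p = ιB (bB p.1) * ιG p.2)
    (e : G → A)
    (he : ∀ m : G, e m = (Fintype.card G : k)⁻¹ • ∑ g : G, ((χ m g : kˣ) : k) • ιG g)
    (L : Submodule k B)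
    (hLideal : ∀ c : B, ∀ b ∈ L, c * b ∈ L)
    (hLmod : ∀ g : G, ∀ b ∈ L, τ g b ∈ L)
    (m : G) :
    (∀ a : A, ∀ x ∈ Submodule.span k {x : A | ∃ b ∈ L, x = ιB b * e m},
      a * x ∈ Submodule.span k {x : A | ∃ b ∈ L, x = ιB b * e m}) ∧
    (Submodule.span k {x : A | ∃ b ∈ L, x = ιB b * e m}
        ≤ Submodule.span k {x : A | ∃ b ∈ L, ∃ c : B, x = (ιB b * e m) * ιB c} ∧
      (∀ (a x : A), x ∈ Submodule.span k {x : A | ∃ b ∈ L, ∃ c : B, x = (ιB b * e m) * ιB c} →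
        a * x ∈ Submodule.span k {x : A | ∃ b ∈ L, ∃ c : B, x = (ιB b * e m) * ιB c} ∧
        x * a ∈ Submodule.span k {x : A | ∃ b ∈ L, ∃ c : B, x = (ιB b * e m) * ιB c}) ∧
      (∀ J : Submodule k A, (∀ (a x : A), x ∈ J → a * x ∈ J ∧ x * a ∈ J) →
        Submodule.span k {x : A | ∃ b ∈ L, x = ιB b * e m} ≤ J →
        Submodule.span k {x : A | ∃ b ∈ L, ∃ c : B, x = (ιB b * e m) * ιB c} ≤ J)) :=
  stmt14_general k G B A ι χ τ ιB ιG hcomm bB bA hbA e he L hLideal hLmod m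
end

section
/- In the setting where B is a power of k with primitive idempotent basis F permuted by the finite abelian group G, two minimal ideals of B # k[G] coincide, M_{f,m} = M_{f',m'}, if and only if f and f' lie in the same G-orbit and m + I_f = m' + I_f, where I_f = {z : χ_z(y) = 1 for all y in the stabilizer of f}. -/
/-!
In the basis `δ_x g` of `A`, a generator `b e_m c` has coefficient `|G|⁻¹ χ_m(g) b(x) c(g⁻¹ x)`
at `(x, g)`. So the coefficients of every element of `M_{f,m}` vanish off `O_f × G` and are
`χ_m`-equivariant along the stabilizer of each point; conversely, every element with these two
properties is a combination of the generators `δ_x e_m δ_{g⁻¹ x}`, the factor `|Stab x|⁻¹`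
compensating for the fact that `δ_x e_m δ_{g⁻¹ x}` only depends on the coset `g · Stab x`.
With this description the theorem is read off from the element `δ_{f'} e_{m'} δ_{f'}`: its
coefficient at `(f', 1)` is nonzero, which forces `f' ∈ O_f`, and its coefficients at `(f', y)`,
`y ∈ Stab f`, force `χ_m(y) = χ_{m'}(y)`.
-/

open MulAction Finset

lemma MulAction.stabilizer_eq_of_mem_orbit_s17 {G α : Type*} [CommGroup G] [MulAction G α] {x y : α}
    (h : y ∈ orbit G x) : stabilizer G y = stabilizer G x := by
  obtain ⟨g, rfl⟩ := h
  exact stabilizer_smul_eq_right g x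

lemma Subgroup.natCast_card_ne_zero {R G : Type*} [Semiring R] [Group G] [Fintype G]
    (H : Subgroup G) (hG : (Fintype.card G : R) ≠ 0) : (Nat.card H : R) ≠ 0 := by
  intro hH
  have := Nat.cast_dvd_cast (α := R) H.card_subgroup_dvd_card
  rw [hH, zero_dvd_iff, Nat.card_eq_fintype_card] at this
  exact hG this

lemma sum_filter_inv_smul_eq_card_stabilizer_nsmul {G α M : Type*} [Group G] [Fintype G]
    [MulAction G α] [DecidableEq α] [AddCommMonoid M] (x : α) (φ : G → M)
    (hφ : ∀ s ∈ stabilizer G x, ∀ h, φ (s * h) = φ h) (g : G) :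
    ∑ h with h⁻¹ • x = g⁻¹ • x, φ h = Nat.card (stabilizer G x) • φ g := by
  classical
  have hcoset : ∀ s : G, (s * g)⁻¹ • x = g⁻¹ • x ↔ s ∈ stabilizer G x := by
    intro s
    rw [mul_inv_rev, mul_smul, smul_left_cancel_iff, inv_smul_eq_iff, eq_comm]
    rfl
  rw [sum_filter, ← Equiv.sum_comp (Equiv.mulRight g)]
  simp only [Equiv.coe_mulRight, hcoset]
  rw [← sum_filter, sum_congr rfl fun s hs => hφ s (mem_filter.1 hs).2 g, sum_const,
    Nat.card_eq_fintype_card, Fintype.card_subtype]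

section SmashProduct

variable {k G F A : Type*} [Field k] [CommGroup G] [Ring A] [Algebra k A]
  {ιB : (F → k) →ₐ[k] A} {ιG : G →* A} {bA : Module.Basis (F × G) k A}

lemma algHom_mul_eq_sum_basis [Fintype F] [DecidableEq F]
    (hbA : ∀ p : F × G, bA p = ιB (Pi.single p.1 1) * ιG p.2) (d : F → k) (g : G) :
    ιB d * ιG g = ∑ x, d x • bA (x, g) := by
  simp_rw [hbA, ← smul_mul_assoc, ← map_smul, ← Finset.sum_mul, ← map_sum]
  congr 2
  ext y
  simp [Pi.single_apply]

variable [MulAction G F]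

variable (bA) in
def twistedSubmodule (ψ : G →* kˣ) (O : Set F) : Submodule k A where
  carrier := {a | (∀ x ∉ O, ∀ g, bA.repr a (x, g) = 0) ∧
    ∀ x g, ∀ s ∈ stabilizer G x, bA.repr a (x, s * g) = ψ s * bA.repr a (x, g)}
  add_mem' := by
    rintro a a' ⟨ha, ha'⟩ ⟨hb, hb'⟩
    exact ⟨fun x hx g => by simp [ha x hx g, hb x hx g],
      fun x g s hs => by simp [ha' x g s hs, hb' x g s hs, mul_add]⟩
  zero_mem' := by simp
  smul_mem' := by
    rintro t a ⟨ha, ha'⟩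
    exact ⟨fun x hx g => by simp [ha x hx g],
      fun x g s hs => by simp [ha' x g s hs, mul_left_comm]⟩

lemma twistedSubmodule_congr {ψ ψ' : G →* kˣ} {O : Set F}
    (h : ∀ x ∈ O, ∀ s ∈ stabilizer G x, ψ s = ψ' s) :
    twistedSubmodule bA ψ O = twistedSubmodule bA ψ' O := by
  suffices key : ∀ ψ ψ' : G →* kˣ, (∀ x ∈ O, ∀ s ∈ stabilizer G x, ψ s = ψ' s) →
      twistedSubmodule bA ψ O ≤ twistedSubmodule bA ψ' O from
    le_antisymm (key ψ ψ' h) (key ψ' ψ fun x hx s hs => (h x hx s hs).symm)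
  rintro ψ ψ' h a ⟨hsupp, hequiv⟩
  refine ⟨hsupp, fun x g s hs => ?_⟩
  by_cases hx : x ∈ O
  · rw [hequiv x g s hs, h x hx s hs]
  · rw [hsupp x hx, hsupp x hx, mul_zero]

variable [Fintype F] [DecidableEq F] [Fintype G]
  (hcomm : ∀ (g : G) (b : F → k), ιG g * ιB b = ιB (fun x => b (g⁻¹ • x)) * ιG g)
  (hbA : ∀ p : F × G, bA p = ιB (Pi.single p.1 1) * ιG p.2)
  {ψ : G →* kˣ} {e : A} (he : e = (Fintype.card G : k)⁻¹ • ∑ g, (ψ g : k) • ιG g)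
include hcomm hbA he

lemma repr_mul_mul (b c : F → k) (p : F × G) :
    bA.repr (ιB b * e * ιB c) p
      = (Fintype.card G : k)⁻¹ * ((ψ p.2 : k) * (b p.1 * c (p.2⁻¹ • p.1))) := by
  have hsum : ιB b * e * ιB c = (Fintype.card G : k)⁻¹ •
      ∑ p : F × G, ((ψ p.2 : k) * (b p.1 * c (p.2⁻¹ • p.1))) • bA p := by
    simp_rw [he, mul_smul_comm, smul_mul_assoc, Finset.mul_sum, Finset.sum_mul, mul_smul_comm,
      smul_mul_assoc, mul_assoc, hcomm, ← mul_assoc, ← map_mul, algHom_mul_eq_sum_basis hbA,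
      Fintype.sum_prod_type_right, Finset.smul_sum, smul_smul, Pi.mul_apply, mul_assoc]
  rw [hsum, map_smul, Finsupp.smul_apply, bA.repr_sum_self, smul_eq_mul]

lemma mul_mul_mem_twistedSubmodule {O : Set F} {b : F → k} (hb : ∀ x ∉ O, b x = 0)
    (c : F → k) : ιB b * e * ιB c ∈ twistedSubmodule bA ψ O := by
  refine ⟨fun x hx g => by rw [repr_mul_mul hcomm hbA he, hb x hx]; ring, fun x g s hs => ?_⟩
  have hsg : (s * g)⁻¹ • x = g⁻¹ • x := by
    rw [mul_inv_rev, mul_smul, inv_smul_eq_iff.2 hs.symm]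
  rw [repr_mul_mul hcomm hbA he, repr_mul_mul hcomm hbA he, hsg, map_mul, Units.val_mul]
  ring

lemma repr_single_mul_mul_single {x : F} {y : G} (hy : y ∈ stabilizer G x) :
    bA.repr (ιB (Pi.single x 1) * e * ιB (Pi.single x 1)) (x, y)
      = (Fintype.card G : k)⁻¹ * ψ y := by
  rw [repr_mul_mul hcomm hbA he, inv_smul_eq_iff.2 hy.symm]
  simp

lemma mem_and_eq_of_single_mul_mul_single_mem (hcard : (Fintype.card G : k) ≠ 0) {O : Set F}
    {ψ' : G →* kˣ} {x : F}
    (h : ιB (Pi.single x 1) * e * ιB (Pi.single x 1) ∈ twistedSubmodule bA ψ' O) :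
    x ∈ O ∧ ∀ y ∈ stabilizer G x, ψ' y = ψ y := by
  have hcoeff := repr_single_mul_mul_single hcomm hbA he (one_mem (stabilizer G x))
  rw [map_one, Units.val_one, mul_one] at hcoeff
  refine ⟨by_contra fun hx => inv_ne_zero hcard (hcoeff ▸ h.1 x hx 1), fun y hy => Units.ext ?_⟩
  have hequiv := h.2 x 1 y hy
  rw [mul_one, repr_single_mul_mul_single hcomm hbA he hy, hcoeff, mul_comm] at hequiv
  exact mul_right_cancel₀ (inv_ne_zero hcard) hequiv.symm

lemma eq_sum_smul_single_mul_mul_single (hcard : (Fintype.card G : k) ≠ 0) {a : A}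
    (ha : ∀ x g, ∀ s ∈ stabilizer G x, bA.repr a (x, s * g) = ψ s * bA.repr a (x, g)) :
    a = ∑ p : F × G, ((Fintype.card G : k) * (Nat.card (stabilizer G p.1) : k)⁻¹ *
      (((ψ p.2)⁻¹ : kˣ) : k) * bA.repr a p) •
        (ιB (Pi.single p.1 1) * e * ιB (Pi.single (p.2⁻¹ • p.1) 1)) := by
  apply bA.repr.injective
  ext ⟨x, g⟩
  rw [map_sum, Finsupp.finsetSum_apply]
  simp_rw [map_smul, Finsupp.smul_apply, repr_mul_mul hcomm hbA he, smul_eq_mul]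
  rw [Fintype.sum_prod_type, sum_eq_single x]
  · set φ : G → k := fun h => (((ψ h)⁻¹ : kˣ) : k) * bA.repr a (x, h)
    have hφ : ∀ s ∈ stabilizer G x, ∀ h, φ (s * h) = φ h := fun s hs h => by
      simp only [φ, ha x h s hs, map_mul, Units.val_mul, Units.val_inv_eq_inv_val]
      field_simp
    have hterm : ∀ h : G, (Fintype.card G : k) * (Nat.card (stabilizer G x) : k)⁻¹ *
        (((ψ h)⁻¹ : kˣ) : k) * bA.repr a (x, h) * ((Fintype.card G : k)⁻¹ * ((ψ g : k) *
          ((Pi.single x 1 : F → k) x * (Pi.single (h⁻¹ • x) 1 : F → k) (g⁻¹ • x))))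
        = if h⁻¹ • x = g⁻¹ • x then (Nat.card (stabilizer G x) : k)⁻¹ * ψ g * φ h else 0 := by
      intro h
      simp only [Pi.single_eq_same, Pi.single_apply, eq_comm (a := g⁻¹ • x), φ]
      split_ifs
      · field_simp
      · simp
    simp only [Fintype.sum_congr _ _ hterm]
    rw [← sum_filter, ← mul_sum, sum_filter_inv_smul_eq_card_stabilizer_nsmul x φ hφ g, nsmul_eq_mul]
    have hN := (stabilizer G x).natCast_card_ne_zero hcard
    simp only [φ, Units.val_inv_eq_inv_val]
    field_simp
  · intro y _ hy
    simp [Pi.single_eq_of_ne (Ne.symm hy)]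
  · simp

lemma span_eq_twistedSubmodule (hcard : (Fintype.card G : k) ≠ 0) (O : Set F) :
    Submodule.span k {a : A | ∃ b : F → k, (∀ z : F, z ∉ O → b z = 0) ∧
      ∃ c : F → k, a = ιB b * e * ιB c} = twistedSubmodule bA ψ O := by
  refine le_antisymm (Submodule.span_le.2 ?_) fun a ha => ?_
  · rintro _ ⟨b, hb, c, rfl⟩
    exact mul_mul_mem_twistedSubmodule hcomm hbA he hb c
  rw [eq_sum_smul_single_mul_mul_single hcomm hbA he hcard ha.2]
  refine Submodule.sum_mem _ fun ⟨x, g⟩ _ => ?_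
  by_cases hx : x ∈ O
  · refine Submodule.smul_mem _ _ (Submodule.subset_span ⟨_, fun z hz => ?_, _, rfl⟩)
    exact Pi.single_eq_of_ne (ne_of_mem_of_not_mem hx hz).symm _
  · rw [ha.1 x hx g, mul_zero, zero_smul]
    exact Submodule.zero_mem _

end SmashProduct

theorem stmt17_general (k G F A : Type) [Field k] [CommGroup G] [Fintype G]
    [Fintype F] [DecidableEq F] [MulAction G F]
    (χ : G →* G →* kˣ)
    (hcard : (Fintype.card G : k) ≠ 0)
    [Ring A] [Algebra k A] (ιB : (F → k) →ₐ[k] A) (ιG : G →* A)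
    (hcomm : ∀ (g : G) (b : F → k), ιG g * ιB b = ιB (fun x => b (g⁻¹ • x)) * ιG g)
    (bA : Module.Basis (F × G) k A)
    (hbA : ∀ p : F × G, bA p = ιB (Pi.single p.1 1) * ιG p.2)
    (e : G → A)
    (he : ∀ m : G, e m = (Fintype.card G : k)⁻¹ • ∑ g : G, ((χ m g : kˣ) : k) • ιG g)
    (M : F → G → Submodule k A)
    (hM : ∀ (f : F) (m : G), M f m = Submodule.span k
      {x : A | ∃ b : F → k, (∀ z : F, z ∉ MulAction.orbit G f → b z = 0) ∧
        ∃ c : F → k, x = (ιB b * e m) * ιB c})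
    (f f' : F) (m m' : G) :
    M f m = M f' m' ↔
      (f' ∈ MulAction.orbit G f ∧
        ∀ y ∈ MulAction.stabilizer G f, χ (m⁻¹ * m') y = 1) := by
  have hM' : ∀ f m, M f m = twistedSubmodule bA (χ m) (orbit G f) := fun f m => by
    rw [hM, span_eq_twistedSubmodule hcomm hbA (he m) hcard]
  have hχ_eq : ∀ y, χ (m⁻¹ * m') y = 1 ↔ χ m y = χ m' y := fun y => by
    rw [map_mul, map_inv, MonoidHom.mul_apply, MonoidHom.inv_apply, inv_mul_eq_one]
  rw [hM', hM']
  constructor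
  · intro h
    obtain ⟨horb, hchar⟩ := mem_and_eq_of_single_mul_mul_single_mem hcomm hbA (he m') hcard
      (h ▸ mul_mul_mem_twistedSubmodule hcomm hbA (he m')
        (fun z hz => Pi.single_eq_of_ne (ne_of_mem_of_not_mem (mem_orbit_self f') hz).symm _) _)
    refine ⟨horb, fun y hy => (hχ_eq y).2 (hchar y ?_)⟩
    rwa [stabilizer_eq_of_mem_orbit_s17 horb]
  · rintro ⟨horb, hy⟩
    rw [orbit_eq_iff.2 horb]
    refine twistedSubmodule_congr fun x hx s hs => (hχ_eq s).1 (hy s ?_)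
    rwa [← stabilizer_eq_of_mem_orbit_s17 hx]

/-- In the setting where `B = F → k` is a power of `k` with primitive
idempotent basis `F` permuted by the finite abelian group `G` (with character pairing `χ`),
and `A = B # k[G]` is the smash product (presented by `ιB`, `ιG`) with character idempotents
`e_m`, two minimal ideals `M_{f,m} = (span O_f # e_m)(B # 1)` coincide, `M_{f,m} = M_{f',m'}`,
if and only if `f` and `f'` lie in the same `G`-orbit and `m + I_f = m' + I_f`, where
`I_f = {z : χ z y = 1 for all y in the stabilizer of f}`. -/
theorem stmt17 (k G F A : Type) [Field k] [CommGroup G] [Fintype G]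
    [Fintype F] [DecidableEq F] [MulAction G F]
    (χ : G →* G →* kˣ)
    (hχ : ∀ m : G, m ≠ 1 → ∑ g : G, ((χ m g : kˣ) : k) = 0)
    (hχ' : ∀ g : G, g ≠ 1 → ∑ m : G, ((χ m g : kˣ) : k) = 0)
    (lam : k) (hlam : IsPrimitiveRoot lam (Fintype.card G))
    (hcard : (Fintype.card G : k) ≠ 0)
    [Ring A] [Algebra k A] (ιB : (F → k) →ₐ[k] A) (ιG : G →* A)
    (hcomm : ∀ (g : G) (b : F → k), ιG g * ιB b = ιB (fun x => b (g⁻¹ • x)) * ιG g)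
    (bA : Module.Basis (F × G) k A)
    (hbA : ∀ p : F × G, bA p = ιB (Pi.single p.1 1) * ιG p.2)
    (e : G → A)
    (he : ∀ m : G, e m = (Fintype.card G : k)⁻¹ • ∑ g : G, ((χ m g : kˣ) : k) • ιG g)
    (M : F → G → Submodule k A)
    (hM : ∀ (f : F) (m : G), M f m = Submodule.span k
      {x : A | ∃ b : F → k, (∀ z : F, z ∉ MulAction.orbit G f → b z = 0) ∧
        ∃ c : F → k, x = (ιB b * e m) * ιB c})
    (f f' : F) (m m' : G) :
    M f m = M f' m' ↔
      (f' ∈ MulAction.orbit G f ∧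
        ∀ y ∈ MulAction.stabilizer G f, χ (m⁻¹ * m') y = 1) :=
  stmt17_general k G F A χ hcard ιB ιG hcomm bA hbA e he M hM f f' m m'
end
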